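/- Let w be a smooth nowhere-degenerate complex function on a domain of ℂ, A = 1 + |w|², and P = (1/A)·[[1, w̄],[w, |w|²]]. Then w satisfies the CP¹ sigma model equation ∂∂̄w − (2w̄/A)∂w ∂̄w = 0 (together with its complex conjugate) if and only if [∂∂̄P, P] = 0. -/

import Mathlib

open Complex ComplexConjugate Matrix

/-- The Wirtinger derivative `∂ = ∂/∂z`. -/
noncomputable def wdz (f : ℂ → ℂ) (z : ℂ) : ℂ :=
  (1 / 2 : ℂ) * (fderiv ℝ f z 1 - I * fderiv ℝ f z I)

/-- The Wirtinger derivative `∂̄ = ∂/∂z̄`. -/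
noncomputable def wdzbar (f : ℂ → ℂ) (z : ℂ) : ℂ :=
  (1 / 2 : ℂ) * (fderiv ℝ f z 1 + I * fderiv ℝ f z I)

/-- Entrywise Wirtinger derivative `∂` of a matrix-valued function. -/
noncomputable def wdzM (f : ℂ → Matrix (Fin 2) (Fin 2) ℂ) (z : ℂ) :
    Matrix (Fin 2) (Fin 2) ℂ :=
  Matrix.of fun i j => wdz (fun t => f t i j) z

/-- Entrywise Wirtinger derivative `∂̄` of a matrix-valued function. -/
noncomputable def wdzbarM (f : ℂ → Matrix (Fin 2) (Fin 2) ℂ) (z : ℂ) :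
    Matrix (Fin 2) (Fin 2) ℂ :=
  Matrix.of fun i j => wdzbar (fun t => f t i j) z

section CP1Aux
open Filter


lemma wdz_congr {f g : ℂ → ℂ} {z : ℂ} (h : f =ᶠ[nhds z] g) : wdz f z = wdz g z := by
  unfold wdz; rw [h.fderiv_eq]

lemma wdz_add {f g : ℂ → ℂ} {z : ℂ} (hf : DifferentiableAt ℝ f z)
    (hg : DifferentiableAt ℝ g z) :
    wdz (fun t => f t + g t) z = wdz f z + wdz g z := by
  unfold wdz; rw [fderiv_fun_add hf hg]; simp; ring

lemma wdzbar_add {f g : ℂ → ℂ} {z : ℂ} (hf : DifferentiableAt ℝ f z)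
    (hg : DifferentiableAt ℝ g z) :
    wdzbar (fun t => f t + g t) z = wdzbar f z + wdzbar g z := by
  unfold wdzbar; rw [fderiv_fun_add hf hg]; simp; ring

lemma wdz_mul {f g : ℂ → ℂ} {z : ℂ} (hf : DifferentiableAt ℝ f z)
    (hg : DifferentiableAt ℝ g z) :
    wdz (fun t => f t * g t) z = wdz f z * g z + f z * wdz g z := by
  unfold wdz; rw [fderiv_fun_mul hf hg]
  simp [ContinuousLinearMap.add_apply, ContinuousLinearMap.smul_apply, smul_eq_mul]; ring

lemma wdzbar_mul {f g : ℂ → ℂ} {z : ℂ} (hf : DifferentiableAt ℝ f z)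
    (hg : DifferentiableAt ℝ g z) :
    wdzbar (fun t => f t * g t) z = wdzbar f z * g z + f z * wdzbar g z := by
  unfold wdzbar; rw [fderiv_fun_mul hf hg]
  simp [ContinuousLinearMap.add_apply, ContinuousLinearMap.smul_apply, smul_eq_mul]; ring

lemma wdz_conj {f : ℂ → ℂ} {z : ℂ} (hf : DifferentiableAt ℝ f z) :
    wdz (fun t => conj (f t)) z = conj (wdzbar f z) := by
  have h : fderiv ℝ (fun t => conj (f t)) z =
      (Complex.conjCLE.toContinuousLinearMap).comp (fderiv ℝ f z) :=
    (Complex.conjCLE.toContinuousLinearMap.hasFDerivAt.comp z hf.hasFDerivAt).fderiv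
  unfold wdz wdzbar
  rw [h]
  simp [ContinuousLinearMap.comp_apply, Complex.conjCLE_apply, map_add, _root_.map_mul, Complex.conj_I, map_ofNat, map_div₀, _root_.map_one]
  try ring

lemma wdzbar_conj {f : ℂ → ℂ} {z : ℂ} (hf : DifferentiableAt ℝ f z) :
    wdzbar (fun t => conj (f t)) z = conj (wdz f z) := by
  have h : fderiv ℝ (fun t => conj (f t)) z =
      (Complex.conjCLE.toContinuousLinearMap).comp (fderiv ℝ f z) :=
    (Complex.conjCLE.toContinuousLinearMap.hasFDerivAt.comp z hf.hasFDerivAt).fderiv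
  unfold wdz wdzbar
  rw [h]
  simp [ContinuousLinearMap.comp_apply, Complex.conjCLE_apply, map_add, _root_.map_mul, Complex.conj_I, map_ofNat, map_div₀, _root_.map_one]
  try ring

lemma wdz_inv {f : ℂ → ℂ} {z : ℂ} (hf : DifferentiableAt ℝ f z) (h0 : f z ≠ 0) :
    wdz (fun t => (f t)⁻¹) z = -(wdz f z) / (f z) ^ 2 := by
  have h : fderiv ℝ (fun t => (f t)⁻¹) z =
      (-(ContinuousLinearMap.mulLeftRight ℝ ℂ (f z)⁻¹ (f z)⁻¹)).comp (fderiv ℝ f z) :=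
    ((hasFDerivAt_inv' h0).comp z hf.hasFDerivAt).fderiv
  unfold wdz
  rw [h]
  simp only [ContinuousLinearMap.comp_apply, ContinuousLinearMap.neg_apply,
    ContinuousLinearMap.mulLeftRight_apply]
  field_simp
  ring

lemma wdzbar_inv {f : ℂ → ℂ} {z : ℂ} (hf : DifferentiableAt ℝ f z) (h0 : f z ≠ 0) :
    wdzbar (fun t => (f t)⁻¹) z = -(wdzbar f z) / (f z) ^ 2 := by
  have h : fderiv ℝ (fun t => (f t)⁻¹) z =
      (-(ContinuousLinearMap.mulLeftRight ℝ ℂ (f z)⁻¹ (f z)⁻¹)).comp (fderiv ℝ f z) :=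
    ((hasFDerivAt_inv' h0).comp z hf.hasFDerivAt).fderiv
  unfold wdzbar
  rw [h]
  simp only [ContinuousLinearMap.comp_apply, ContinuousLinearMap.neg_apply,
    ContinuousLinearMap.mulLeftRight_apply]
  field_simp
  ring


lemma wdz_const (c z : ℂ) : wdz (fun _ => c) z = 0 := by
  unfold wdz; simp

lemma wdzbar_const (c z : ℂ) : wdzbar (fun _ => c) z = 0 := by
  unfold wdzbar; simp

lemma wdz_neg {f : ℂ → ℂ} {z : ℂ} :
    wdz (fun t => -(f t)) z = -(wdz f z) := by
  unfold wdz; rw [fderiv_fun_neg]; simp; ring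

lemma wdzbar_neg {f : ℂ → ℂ} {z : ℂ} :
    wdzbar (fun t => -(f t)) z = -(wdzbar f z) := by
  unfold wdzbar; rw [fderiv_fun_neg]; simp; ring

lemma contDiffAt_wdz {f : ℂ → ℂ} {z : ℂ} (hf : ContDiffAt ℝ (⊤ : ℕ∞) f z) :
    ContDiffAt ℝ (⊤ : ℕ∞) (fun t => wdz f t) z := by
  have h1 : ContDiffAt ℝ (⊤ : ℕ∞) (fderiv ℝ f) z := hf.fderiv_right (by simp)
  have h2 : ContDiffAt ℝ (⊤ : ℕ∞) (fun t => fderiv ℝ f t 1) z := h1.clm_apply contDiffAt_const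
  have h3 : ContDiffAt ℝ (⊤ : ℕ∞) (fun t => fderiv ℝ f t I) z := h1.clm_apply contDiffAt_const
  exact contDiffAt_const.mul (h2.sub (contDiffAt_const.mul h3))

lemma contDiffAt_wdzbar {f : ℂ → ℂ} {z : ℂ} (hf : ContDiffAt ℝ (⊤ : ℕ∞) f z) :
    ContDiffAt ℝ (⊤ : ℕ∞) (fun t => wdzbar f t) z := by
  have h1 : ContDiffAt ℝ (⊤ : ℕ∞) (fderiv ℝ f) z := hf.fderiv_right (by simp)
  have h2 : ContDiffAt ℝ (⊤ : ℕ∞) (fun t => fderiv ℝ f t 1) z := h1.clm_apply contDiffAt_const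
  have h3 : ContDiffAt ℝ (⊤ : ℕ∞) (fun t => fderiv ℝ f t I) z := h1.clm_apply contDiffAt_const
  exact contDiffAt_const.mul (h2.add (contDiffAt_const.mul h3))

/-- Bundled data: value and `∂` derivative of `f` at `z`. -/
structure WZ (f : ℂ → ℂ) (z a u : ℂ) : Prop where
  val : f z = a
  diff : DifferentiableAt ℝ f z
  der : wdz f z = u

/-- Bundled data: value and `∂̄` derivative of `f` at `z`. -/
structure WB (f : ℂ → ℂ) (z a u : ℂ) : Prop where
  val : f z = a
  diff : DifferentiableAt ℝ f z
  der : wdzbar f z = u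

namespace WZ

lemma add {f g : ℂ → ℂ} {z a u a' u' : ℂ} (hf : WZ f z a u) (hg : WZ g z a' u') :
    WZ (fun t => f t + g t) z (a + a') (u + u') :=
  ⟨by show f z + g z = _; rw [hf.val, hg.val], hf.diff.add hg.diff,
    by rw [wdz_add hf.diff hg.diff, hf.der, hg.der]⟩

lemma const_add {g : ℂ → ℂ} {z a' u' : ℂ} (c : ℂ) (hg : WZ g z a' u') :
    WZ (fun t => c + g t) z (c + a') u' := by
  have h : WZ (fun _ => c) z c 0 := ⟨rfl, differentiableAt_const c, wdz_const c z⟩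
  simpa using h.add hg

lemma mul {f g : ℂ → ℂ} {z a u a' u' : ℂ} (hf : WZ f z a u) (hg : WZ g z a' u') :
    WZ (fun t => f t * g t) z (a * a') (u * a' + a * u') :=
  ⟨by show f z * g z = _; rw [hf.val, hg.val], hf.diff.mul hg.diff,
    by rw [wdz_mul hf.diff hg.diff, hf.val, hg.val, hf.der, hg.der]⟩

lemma inv {f : ℂ → ℂ} {z a u : ℂ} (hf : WZ f z a u) (h0 : a ≠ 0) :
    WZ (fun t => (f t)⁻¹) z a⁻¹ (-(u * ((a * a)⁻¹))) := by
  have hfz : f z ≠ 0 := by rw [hf.val]; exact h0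
  refine ⟨by show (f z)⁻¹ = _; rw [hf.val], hf.diff.inv hfz, ?_⟩
  rw [wdz_inv hf.diff hfz, hf.val, hf.der]
  rw [pow_two, div_eq_mul_inv, neg_mul]

lemma neg {f : ℂ → ℂ} {z a u : ℂ} (hf : WZ f z a u) :
    WZ (fun t => -(f t)) z (-a) (-u) :=
  ⟨by show -(f z) = _; rw [hf.val], hf.diff.neg, by rw [wdz_neg, hf.der]⟩

lemma conj' {f : ℂ → ℂ} {z a u : ℂ} (hf : WB f z a u) :
    WZ (fun t => conj (f t)) z (conj a) (conj u) :=
  ⟨by show conj (f z) = _; rw [hf.val],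
    Complex.conjCLE.toContinuousLinearMap.differentiableAt.comp z hf.diff,
    by rw [wdz_conj hf.diff, hf.der]⟩

end WZ

namespace WB

lemma add {f g : ℂ → ℂ} {z a u a' u' : ℂ} (hf : WB f z a u) (hg : WB g z a' u') :
    WB (fun t => f t + g t) z (a + a') (u + u') :=
  ⟨by show f z + g z = _; rw [hf.val, hg.val], hf.diff.add hg.diff,
    by rw [wdzbar_add hf.diff hg.diff, hf.der, hg.der]⟩

lemma const_add {g : ℂ → ℂ} {z a' u' : ℂ} (c : ℂ) (hg : WB g z a' u') :
    WB (fun t => c + g t) z (c + a') u' := by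
  have h : WB (fun _ => c) z c 0 := ⟨rfl, differentiableAt_const c, wdzbar_const c z⟩
  simpa using h.add hg

lemma mul {f g : ℂ → ℂ} {z a u a' u' : ℂ} (hf : WB f z a u) (hg : WB g z a' u') :
    WB (fun t => f t * g t) z (a * a') (u * a' + a * u') :=
  ⟨by show f z * g z = _; rw [hf.val, hg.val], hf.diff.mul hg.diff,
    by rw [wdzbar_mul hf.diff hg.diff, hf.val, hg.val, hf.der, hg.der]⟩

lemma inv {f : ℂ → ℂ} {z a u : ℂ} (hf : WB f z a u) (h0 : a ≠ 0) :
    WB (fun t => (f t)⁻¹) z a⁻¹ (-(u * ((a * a)⁻¹))) := by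
  have hfz : f z ≠ 0 := by rw [hf.val]; exact h0
  refine ⟨by show (f z)⁻¹ = _; rw [hf.val], hf.diff.inv hfz, ?_⟩
  rw [wdzbar_inv hf.diff hfz, hf.val, hf.der]
  rw [pow_two, div_eq_mul_inv, neg_mul]

lemma neg {f : ℂ → ℂ} {z a u : ℂ} (hf : WB f z a u) :
    WB (fun t => -(f t)) z (-a) (-u) :=
  ⟨by show -(f z) = _; rw [hf.val], hf.diff.neg, by rw [wdzbar_neg, hf.der]⟩

lemma conj' {f : ℂ → ℂ} {z a u : ℂ} (hf : WZ f z a u) :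
    WB (fun t => conj (f t)) z (conj a) (conj u) :=
  ⟨by show conj (f z) = _; rw [hf.val],
    Complex.conjCLE.toContinuousLinearMap.differentiableAt.comp z hf.diff,
    by rw [wdzbar_conj hf.diff, hf.der]⟩

end WB

lemma wdz_congr_on {s : Set ℂ} (hs : IsOpen s) {z : ℂ} (hz : z ∈ s) {f g : ℂ → ℂ}
    (h : ∀ t ∈ s, f t = g t) : wdz f z = wdz g z :=
  wdz_congr (eventually_of_mem (hs.mem_nhds hz) h)

end CP1Aux

set_option maxHeartbeats 2000000 in
/-- The `CP¹` sigma model equation for `w` (together with its conjugate) is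
equivalent to the projector equation `[∂∂̄P, P] = 0` for
`P = (1/(1+|w|²))·[[1, w̄],[w, |w|²]]`. -/
theorem cp1_iff_projector (s : Set ℂ) (hs : IsOpen s) (w : ℂ → ℂ)
    (hw : ContDiffOn ℝ (⊤ : ℕ∞) w s)
    (P : ℂ → Matrix (Fin 2) (Fin 2) ℂ)
    (hP : ∀ z, P z = (((1 + normSq (w z) : ℝ) : ℂ))⁻¹ •
      !![1, conj (w z); w z, ((normSq (w z) : ℝ) : ℂ)]) :
    ∀ z ∈ s,
      ((wdz (fun t => wdzbar w t) z
          - 2 * conj (w z) / (1 + ((normSq (w z) : ℝ) : ℂ)) * wdz w z * wdzbar w z = 0) ∧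
        (wdz (fun t => wdzbar (fun u => conj (w u)) t) z
          - 2 * w z / (1 + ((normSq (w z) : ℝ) : ℂ)) * wdz (fun u => conj (w u)) z
            * wdzbar (fun u => conj (w u)) z = 0)) ↔
      wdzM (fun t => wdzbarM P t) z * P z - P z * wdzM (fun t => wdzbarM P t) z = 0 := by
  intro z hz
  have hsnz : s ∈ nhds z := hs.mem_nhds hz
  have hwz : ContDiffAt ℝ (⊤ : ℕ∞) w z := hw.contDiffAt hsnz
  have hdw : ∀ t ∈ s, DifferentiableAt ℝ w t :=
    fun t ht => (hw.contDiffAt (hs.mem_nhds ht)).differentiableAt (by simp)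
  have hmul : ∀ t : ℂ, ((normSq (w t) : ℝ) : ℂ) = w t * conj (w t) :=
    fun t => (Complex.mul_conj _).symm
  have hAcast : ∀ t : ℂ, ((1 + normSq (w t) : ℝ) : ℂ) = 1 + w t * conj (w t) := by
    intro t; push_cast; rw [Complex.mul_conj]
  have hAne : ∀ t : ℂ, (1 : ℂ) + w t * conj (w t) ≠ 0 := by
    intro t; rw [← hAcast t]
    refine Complex.ofReal_ne_zero.mpr (ne_of_gt ?_)
    have := normSq_nonneg (w t); linarith
  have hP00 : ∀ t, P t 0 0 = (1 + w t * conj (w t))⁻¹ := by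
    intro t; rw [hP t]
    simp [Matrix.smul_apply, smul_eq_mul, hAcast t]
  have hP01 : ∀ t, P t 0 1 = (1 + w t * conj (w t))⁻¹ * conj (w t) := by
    intro t; rw [hP t]
    simp [Matrix.smul_apply, smul_eq_mul, hAcast t]
  have hP10 : ∀ t, P t 1 0 = (1 + w t * conj (w t))⁻¹ * w t := by
    intro t; rw [hP t]
    simp [Matrix.smul_apply, smul_eq_mul, hAcast t]
  have hP11 : ∀ t, P t 1 1 = (1 + w t * conj (w t))⁻¹ * (w t * conj (w t)) := by
    intro t; rw [hP t]
    simp [Matrix.smul_apply, smul_eq_mul, hAcast t, hmul t]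
  -- first layer : ∂̄ of the entries of P, on s
  have hbar00 : ∀ t ∈ s, wdzbar (fun u => P u 0 0) t =
      -((wdzbar w t * conj (w t) + w t * conj (wdz w t)) *
        (((1 + w t * conj (w t)) * (1 + w t * conj (w t)))⁻¹)) := by
    intro t ht
    have hWZw : WZ w t (w t) (wdz w t) := ⟨rfl, hdw t ht, rfl⟩
    have hWBw : WB w t (w t) (wdzbar w t) := ⟨rfl, hdw t ht, rfl⟩
    have hA := WB.const_add 1 (hWBw.mul (WB.conj' hWZw))
    have h := (hA.inv (hAne t)).der
    rw [show (fun u => P u 0 0) = (fun u => (1 + w u * conj (w u))⁻¹) from funext hP00]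
    exact h
  have hbar01 : ∀ t ∈ s, wdzbar (fun u => P u 0 1) t =
      -((wdzbar w t * conj (w t) + w t * conj (wdz w t)) *
        (((1 + w t * conj (w t)) * (1 + w t * conj (w t)))⁻¹)) * conj (w t)
      + (1 + w t * conj (w t))⁻¹ * conj (wdz w t) := by
    intro t ht
    have hWZw : WZ w t (w t) (wdz w t) := ⟨rfl, hdw t ht, rfl⟩
    have hWBw : WB w t (w t) (wdzbar w t) := ⟨rfl, hdw t ht, rfl⟩
    have hA := WB.const_add 1 (hWBw.mul (WB.conj' hWZw))
    have h := ((hA.inv (hAne t)).mul (WB.conj' hWZw)).der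
    rw [show (fun u => P u 0 1) =
      (fun u => (1 + w u * conj (w u))⁻¹ * conj (w u)) from funext hP01]
    exact h
  have hbar10 : ∀ t ∈ s, wdzbar (fun u => P u 1 0) t =
      -((wdzbar w t * conj (w t) + w t * conj (wdz w t)) *
        (((1 + w t * conj (w t)) * (1 + w t * conj (w t)))⁻¹)) * w t
      + (1 + w t * conj (w t))⁻¹ * wdzbar w t := by
    intro t ht
    have hWZw : WZ w t (w t) (wdz w t) := ⟨rfl, hdw t ht, rfl⟩
    have hWBw : WB w t (w t) (wdzbar w t) := ⟨rfl, hdw t ht, rfl⟩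
    have hA := WB.const_add 1 (hWBw.mul (WB.conj' hWZw))
    have h := ((hA.inv (hAne t)).mul hWBw).der
    rw [show (fun u => P u 1 0) =
      (fun u => (1 + w u * conj (w u))⁻¹ * w u) from funext hP10]
    exact h
  have hbar11 : ∀ t ∈ s, wdzbar (fun u => P u 1 1) t =
      -((wdzbar w t * conj (w t) + w t * conj (wdz w t)) *
        (((1 + w t * conj (w t)) * (1 + w t * conj (w t)))⁻¹)) * (w t * conj (w t))
      + (1 + w t * conj (w t))⁻¹ * (wdzbar w t * conj (w t) + w t * conj (wdz w t)) := by
    intro t ht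
    have hWZw : WZ w t (w t) (wdz w t) := ⟨rfl, hdw t ht, rfl⟩
    have hWBw : WB w t (w t) (wdzbar w t) := ⟨rfl, hdw t ht, rfl⟩
    have hA := WB.const_add 1 (hWBw.mul (WB.conj' hWZw))
    have h := ((hA.inv (hAne t)).mul (hWBw.mul (WB.conj' hWZw))).der
    rw [show (fun u => P u 1 1) =
      (fun u => (1 + w u * conj (w u))⁻¹ * (w u * conj (w u))) from funext hP11]
    exact h
  -- rewrite the sigma-model side of the statement
  have hdwz := hdw z hz
  have dZ : DifferentiableAt ℝ (fun t => wdz w t) z :=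
    (contDiffAt_wdz hwz).differentiableAt (by simp)
  have dQ : DifferentiableAt ℝ (fun t => wdzbar w t) z :=
    (contDiffAt_wdzbar hwz).differentiableAt (by simp)
  have hE2a : wdz (fun u => conj (w u)) z = conj (wdzbar w z) := wdz_conj hdwz
  have hE2b : wdzbar (fun u => conj (w u)) z = conj (wdz w z) := wdzbar_conj hdwz
  have hE2c : wdz (fun t => wdzbar (fun u => conj (w u)) t) z =
      conj (wdzbar (fun t => wdz w t) z) := by
    rw [wdz_congr_on hs hz (fun t ht => wdzbar_conj (hdw t ht))]
    exact wdz_conj dZ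
  rw [hE2a, hE2b, hE2c, hmul z]
  set a := w z with ha
  set p := wdz w z with hp
  set q := wdzbar w z with hq
  set r1 := wdz (fun t => wdzbar w t) z with hr1
  set r2 := wdzbar (fun t => wdz w t) z with hr2
  have hAz : (1 : ℂ) + a * conj a ≠ 0 := by rw [ha]; exact hAne z
  have hAAne : ((1 : ℂ) + a * conj a) * (1 + a * conj a) ≠ 0 := mul_ne_zero hAz hAz
  -- second layer data at z
  have hWZw : WZ w z a p := ⟨ha.symm, hdwz, hp.symm⟩
  have hWBw : WB w z a q := ⟨ha.symm, hdwz, hq.symm⟩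
  have hWZQ : WZ (fun t => wdzbar w t) z q r1 := ⟨hq.symm, dQ, hr1.symm⟩
  have hWBZ : WB (fun t => wdz w t) z p r2 := ⟨hp.symm, dZ, hr2.symm⟩
  have hWZcw : WZ (fun t => conj (w t)) z (conj a) (conj q) := WZ.conj' hWBw
  have hWZPc : WZ (fun t => conj (wdz w t)) z (conj p) (conj r2) := WZ.conj' hWBZ
  have hWZAF := WZ.const_add 1 (hWZw.mul hWZcw)
  have hWZD := (hWZQ.mul hWZcw).add (hWZw.mul hWZPc)
  have hWZAA := hWZAF.mul hWZAF
  have hF00 := (hWZD.mul (hWZAA.inv hAAne)).neg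
  have hF01 := (hF00.mul hWZcw).add ((hWZAF.inv hAz).mul hWZPc)
  have hF10 := (hF00.mul hWZw).add ((hWZAF.inv hAz).mul hWZQ)
  have hF11 := (hF00.mul (hWZw.mul hWZcw)).add ((hWZAF.inv hAz).mul hWZD)
  have HM00 : wdzM (fun t => wdzbarM P t) z 0 0 = _ :=
    (wdz_congr_on hs hz hbar00).trans hF00.der
  have HM01 : wdzM (fun t => wdzbarM P t) z 0 1 = _ :=
    (wdz_congr_on hs hz hbar01).trans hF01.der
  have HM10 : wdzM (fun t => wdzbarM P t) z 1 0 = _ :=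
    (wdz_congr_on hs hz hbar10).trans hF10.der
  have HM11 : wdzM (fun t => wdzbarM P t) z 1 1 = _ :=
    (wdz_congr_on hs hz hbar11).trans hF11.der
  have HM00c : wdzM (fun t => wdzbarM P t) z 0 0 =
      (-((r1 * conj a + q * conj q + (p * conj p + a * conj r2)) * (1 + a * conj a)) + 2 * ((q * conj a + a * conj p) * (p * conj a + a * conj q))) / (1 + a * conj a) ^ 3 := by
    rw [HM00]; simp only [mul_inv]
    have hA0ne := hAz
    generalize hA0 : (1 : ℂ) + a * conj a = A0 at hA0ne ⊢
    rw [div_eq_mul_inv, ← inv_pow]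
    generalize hY : A0⁻¹ = Y
    have hYA : A0 * Y = 1 := by rw [← hY]; exact mul_inv_cancel₀ hA0ne
    linear_combination (q * (conj q) * Y ^ 2 + p * (conj p) * Y ^ 2 + (conj a) * r1 * Y ^ 2 + 2 * (conj a) ^ 2 * p * q * Y ^ 3 + a * (conj r2) * Y ^ 2 + 2 * a * (conj a) * q * (conj q) * Y ^ 3 + 2 * a * (conj a) * p * (conj p) * Y ^ 3 + 2 * a ^ 2 * (conj p) * (conj q) * Y ^ 3) * hYA
  have HM01c : wdzM (fun t => wdzbarM P t) z 0 1 =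
      (conj r2 * (1 + a * conj a) ^ 2 - (conj p * (p * conj a + a * conj q) + conj q * (q * conj a + a * conj p)) * (1 + a * conj a)
        - conj a * (r1 * conj a + q * conj q + (p * conj p + a * conj r2)) * (1 + a * conj a) + 2 * conj a * ((q * conj a + a * conj p) * (p * conj a + a * conj q))) / (1 + a * conj a) ^ 3 := by
    rw [HM01]; simp only [mul_inv]
    have hA0ne := hAz
    generalize hA0 : (1 : ℂ) + a * conj a = A0 at hA0ne ⊢
    rw [div_eq_mul_inv, ← inv_pow]
    generalize hY : A0⁻¹ = Y
    have hYA : A0 * Y = 1 := by rw [← hY]; exact mul_inv_cancel₀ hA0ne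
    linear_combination (-(conj r2) * Y - (conj r2) * A0 * Y ^ 2 + 2 * (conj a) * q * (conj q) * Y ^ 2 + 2 * (conj a) * p * (conj p) * Y ^ 2 + (conj a) ^ 2 * r1 * Y ^ 2 + 2 * (conj a) ^ 3 * p * q * Y ^ 3 + 2 * a * (conj p) * (conj q) * Y ^ 2 + a * (conj a) * (conj r2) * Y ^ 2 + 2 * a * (conj a) ^ 2 * q * (conj q) * Y ^ 3 + 2 * a * (conj a) ^ 2 * p * (conj p) * Y ^ 3 + 2 * a ^ 2 * (conj a) * (conj p) * (conj q) * Y ^ 3) * hYA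
  have HM10c : wdzM (fun t => wdzbarM P t) z 1 0 =
      (r1 * (1 + a * conj a) ^ 2 - (q * (p * conj a + a * conj q) + p * (q * conj a + a * conj p)) * (1 + a * conj a)
        - a * (r1 * conj a + q * conj q + (p * conj p + a * conj r2)) * (1 + a * conj a) + 2 * a * ((q * conj a + a * conj p) * (p * conj a + a * conj q))) / (1 + a * conj a) ^ 3 := by
    rw [HM10]; simp only [mul_inv]
    have hA0ne := hAz
    generalize hA0 : (1 : ℂ) + a * conj a = A0 at hA0ne ⊢
    rw [div_eq_mul_inv, ← inv_pow]
    generalize hY : A0⁻¹ = Y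
    have hYA : A0 * Y = 1 := by rw [← hY]; exact mul_inv_cancel₀ hA0ne
    linear_combination (-r1 * Y - r1 * A0 * Y ^ 2 + 2 * (conj a) * p * q * Y ^ 2 + 2 * a * q * (conj q) * Y ^ 2 + 2 * a * p * (conj p) * Y ^ 2 + a * (conj a) * r1 * Y ^ 2 + 2 * a * (conj a) ^ 2 * p * q * Y ^ 3 + a ^ 2 * (conj r2) * Y ^ 2 + 2 * a ^ 2 * (conj a) * q * (conj q) * Y ^ 3 + 2 * a ^ 2 * (conj a) * p * (conj p) * Y ^ 3 + 2 * a ^ 3 * (conj p) * (conj q) * Y ^ 3) * hYA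
  have HM11c : wdzM (fun t => wdzbarM P t) z 1 1 =
      ((r1 * conj a + q * conj q + (p * conj p + a * conj r2)) * (1 + a * conj a) ^ 2 - 2 * ((q * conj a + a * conj p) * (p * conj a + a * conj q)) * (1 + a * conj a)
        - a * conj a * (r1 * conj a + q * conj q + (p * conj p + a * conj r2)) * (1 + a * conj a) + 2 * a * conj a * ((q * conj a + a * conj p) * (p * conj a + a * conj q))) / (1 + a * conj a) ^ 3 := by
    rw [HM11]; simp only [mul_inv]
    have hA0ne := hAz
    generalize hA0 : (1 : ℂ) + a * conj a = A0 at hA0ne ⊢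
    rw [div_eq_mul_inv, ← inv_pow]
    generalize hY : A0⁻¹ = Y
    have hYA : A0 * Y = 1 := by rw [← hY]; exact mul_inv_cancel₀ hA0ne
    linear_combination (-q * (conj q) * Y - q * (conj q) * A0 * Y ^ 2 - p * (conj p) * Y - p * (conj p) * A0 * Y ^ 2 - (conj a) * r1 * Y - (conj a) * r1 * A0 * Y ^ 2 + 2 * (conj a) ^ 2 * p * q * Y ^ 2 - a * (conj r2) * Y - a * (conj r2) * A0 * Y ^ 2 + 3 * a * (conj a) * q * (conj q) * Y ^ 2 + 3 * a * (conj a) * p * (conj p) * Y ^ 2 + a * (conj a) ^ 2 * r1 * Y ^ 2 + 2 * a * (conj a) ^ 3 * p * q * Y ^ 3 + 2 * a ^ 2 * (conj p) * (conj q) * Y ^ 2 + a ^ 2 * (conj a) * (conj r2) * Y ^ 2 + 2 * a ^ 2 * (conj a) ^ 2 * q * (conj q) * Y ^ 3 + 2 * a ^ 2 * (conj a) ^ 2 * p * (conj p) * Y ^ 3 + 2 * a ^ 3 * (conj a) * (conj p) * (conj q) * Y ^ 3) * hYA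
  have hPz00 : P z 0 0 = (1 + a * conj a)⁻¹ := by rw [hP00 z, ← ha]
  have hPz01 : P z 0 1 = (1 + a * conj a)⁻¹ * conj a := by rw [hP01 z, ← ha]
  have hPz10 : P z 1 0 = (1 + a * conj a)⁻¹ * a := by rw [hP10 z, ← ha]
  have hPz11 : P z 1 1 = (1 + a * conj a)⁻¹ * (a * conj a) := by rw [hP11 z, ← ha]
  have c00 : (wdzM (fun t => wdzbarM P t) z * P z - P z * wdzM (fun t => wdzbarM P t) z) 0 0
      = (a * ((1 + a * conj a) * conj r2 - 2 * a * conj q * conj p) - conj a * ((1 + a * conj a) * r1 - 2 * conj a * p * q)) / (1 + a * conj a) ^ 3 := by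
    simp only [Matrix.sub_apply, Matrix.mul_apply, Fin.sum_univ_two]
    simp only [HM00c, HM01c, HM10c, HM11c, hPz00, hPz01, hPz10, hPz11]
    have hA0ne := hAz
    trans (-(conj a) * r1 * (1 + a * conj a) ^ 2 + 2 * (conj a) ^ 2 * p * q * (1 + a * conj a) + a * (conj r2) * (1 + a * conj a) ^ 2 - 2 * a ^ 2 * (conj p) * (conj q) * (1 + a * conj a)) / (1 + a * conj a) ^ 4
    · generalize hA0 : (1 : ℂ) + a * conj a = A0 at hA0ne ⊢
      field_simp
      ring
    · field_simp
      ring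
  have c01 : (wdzM (fun t => wdzbarM P t) z * P z - P z * wdzM (fun t => wdzbarM P t) z) 0 1
      = (-(conj a * conj a * ((1 + a * conj a) * r1 - 2 * conj a * p * q) + ((1 + a * conj a) * conj r2 - 2 * a * conj q * conj p))) / (1 + a * conj a) ^ 3 := by
    simp only [Matrix.sub_apply, Matrix.mul_apply, Fin.sum_univ_two]
    simp only [HM00c, HM01c, HM10c, HM11c, hPz00, hPz01, hPz10, hPz11]
    have hA0ne := hAz
    trans (-(conj r2) * (1 + a * conj a) ^ 2 + (conj a) * q * (conj q) * (1 + a * conj a) - (conj a) * q * (conj q) * (1 + a * conj a) ^ 2 + (conj a) * p * (conj p) * (1 + a * conj a) - (conj a) * p * (conj p) * (1 + a * conj a) ^ 2 - (conj a) ^ 2 * r1 * (1 + a * conj a) ^ 2 + 2 * (conj a) ^ 3 * p * q * (1 + a * conj a) + 2 * a * (conj p) * (conj q) * (1 + a * conj a) + a * (conj a) ^ 2 * q * (conj q) * (1 + a * conj a) + a * (conj a) ^ 2 * p * (conj p) * (1 + a * conj a)) / (1 + a * conj a) ^ 4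
    · generalize hA0 : (1 : ℂ) + a * conj a = A0 at hA0ne ⊢
      field_simp
      ring
    · field_simp
      ring
  have c10 : (wdzM (fun t => wdzbarM P t) z * P z - P z * wdzM (fun t => wdzbarM P t) z) 1 0
      = (((1 + a * conj a) * r1 - 2 * conj a * p * q) + a * a * ((1 + a * conj a) * conj r2 - 2 * a * conj q * conj p)) / (1 + a * conj a) ^ 3 := by
    simp only [Matrix.sub_apply, Matrix.mul_apply, Fin.sum_univ_two]
    simp only [HM00c, HM01c, HM10c, HM11c, hPz00, hPz01, hPz10, hPz11]
    have hA0ne := hAz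
    trans (r1 * (1 + a * conj a) ^ 2 - 2 * (conj a) * p * q * (1 + a * conj a) - a * q * (conj q) * (1 + a * conj a) + a * q * (conj q) * (1 + a * conj a) ^ 2 - a * p * (conj p) * (1 + a * conj a) + a * p * (conj p) * (1 + a * conj a) ^ 2 + a ^ 2 * (conj r2) * (1 + a * conj a) ^ 2 - a ^ 2 * (conj a) * q * (conj q) * (1 + a * conj a) - a ^ 2 * (conj a) * p * (conj p) * (1 + a * conj a) - 2 * a ^ 3 * (conj p) * (conj q) * (1 + a * conj a)) / (1 + a * conj a) ^ 4
    · generalize hA0 : (1 : ℂ) + a * conj a = A0 at hA0ne ⊢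
      field_simp
      ring
    · field_simp
      ring
  have c11 : (wdzM (fun t => wdzbarM P t) z * P z - P z * wdzM (fun t => wdzbarM P t) z) 1 1
      = (conj a * ((1 + a * conj a) * r1 - 2 * conj a * p * q) - a * ((1 + a * conj a) * conj r2 - 2 * a * conj q * conj p)) / (1 + a * conj a) ^ 3 := by
    simp only [Matrix.sub_apply, Matrix.mul_apply, Fin.sum_univ_two]
    simp only [HM00c, HM01c, HM10c, HM11c, hPz00, hPz01, hPz10, hPz11]
    have hA0ne := hAz
    trans ((conj a) * r1 * (1 + a * conj a) ^ 2 - 2 * (conj a) ^ 2 * p * q * (1 + a * conj a) - a * (conj r2) * (1 + a * conj a) ^ 2 + 2 * a ^ 2 * (conj p) * (conj q) * (1 + a * conj a)) / (1 + a * conj a) ^ 4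
    · generalize hA0 : (1 : ℂ) + a * conj a = A0 at hA0ne ⊢
      field_simp
      ring
    · field_simp
      ring
  have hAz' : (1 : ℂ) + conj a * a ≠ 0 := by rw [mul_comm]; exact hAz
  constructor
  · rintro ⟨h1, h2⟩
    have hE1n : ((1 + a * conj a) * r1 - 2 * conj a * p * q) = 0 := by
      field_simp at h1
      linear_combination h1
    have hE2n : ((1 + a * conj a) * conj r2 - 2 * a * conj q * conj p) = 0 := by
      field_simp at h2
      linear_combination h2
    refine Matrix.ext_iff.mp (fun i j => ?_)
    fin_cases i <;> fin_cases j
    · refine c00.trans ?_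
      rw [Matrix.zero_apply]
      linear_combination (a * hE2n - conj a * hE1n) / (1 + a * conj a) ^ 3
    · refine c01.trans ?_
      rw [Matrix.zero_apply]
      linear_combination (-(conj a * conj a * hE1n) - hE2n) / (1 + a * conj a) ^ 3
    · refine c10.trans ?_
      rw [Matrix.zero_apply]
      linear_combination (hE1n + a * a * hE2n) / (1 + a * conj a) ^ 3
    · refine c11.trans ?_
      rw [Matrix.zero_apply]
      linear_combination (conj a * hE1n - a * hE2n) / (1 + a * conj a) ^ 3
  · intro h
    have n00 : (a * ((1 + a * conj a) * conj r2 - 2 * a * conj q * conj p) - conj a * ((1 + a * conj a) * r1 - 2 * conj a * p * q)) = 0 := by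
      have h00 := Matrix.ext_iff.mpr h 0 0
      rw [c00, Matrix.zero_apply] at h00
      exact (div_eq_zero_iff.mp h00).resolve_right (pow_ne_zero 3 hAz)
    have n01 : (-(conj a * conj a * ((1 + a * conj a) * r1 - 2 * conj a * p * q) + ((1 + a * conj a) * conj r2 - 2 * a * conj q * conj p))) = 0 := by
      have h01 := Matrix.ext_iff.mpr h 0 1
      rw [c01, Matrix.zero_apply] at h01
      exact (div_eq_zero_iff.mp h01).resolve_right (pow_ne_zero 3 hAz)
    have n10 : (((1 + a * conj a) * r1 - 2 * conj a * p * q) + a * a * ((1 + a * conj a) * conj r2 - 2 * a * conj q * conj p)) = 0 := by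
      have h10 := Matrix.ext_iff.mpr h 1 0
      rw [c10, Matrix.zero_apply] at h10
      exact (div_eq_zero_iff.mp h10).resolve_right (pow_ne_zero 3 hAz)
    have hEn : ((1 + a * conj a) * r1 - 2 * conj a * p * q) = 0 ∧ ((1 + a * conj a) * conj r2 - 2 * a * conj q * conj p) = 0 := by
      by_cases ha0 : a = 0
      · constructor
        · rw [ha0] at n10 ⊢
          simpa using n10
        · rw [ha0] at n01 ⊢
          simpa using n01
      · have key : a * ((1 + a * conj a) * conj r2 - 2 * a * conj q * conj p) * (1 + a * conj a) = 0 := by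
          linear_combination n00 + conj a * n10
        have hE2n : ((1 + a * conj a) * conj r2 - 2 * a * conj q * conj p) = 0 := by
          rcases mul_eq_zero.mp key with h' | h'
          · rcases mul_eq_zero.mp h' with h'' | h''
            · exact absurd h'' ha0
            · exact h''
          · exact absurd h' hAz
        have hE1n : ((1 + a * conj a) * r1 - 2 * conj a * p * q) = 0 := by
          linear_combination n10 - a * a * hE2n
        exact ⟨hE1n, hE2n⟩
    constructor
    · field_simp
      linear_combination hEn.1
    · field_simp
      linear_combination hEn.2
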